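/- arXiv:2108.11148 — 7 statements merged into one kernel-verified Lean document; each statement's English description precedes it below -/
import Mathlib

section
/- Let g be a finite-dimensional real Lie algebra and n ⊆ g a nilpotent Lie ideal with dim(g/n) = 1. Let z := {X ∈ n | ∀ Y ∈ n, [X,Y] = 0} be the centre of n. Suppose there exists a linear functional ξ₀ ∈ g* with g(ξ₀) := {X ∈ g | ∀ Y ∈ g, ξ₀([X,Y]) = 0} = {0} (i.e., g is exact symplectic). Then [g,z] ≠ {0}, dim z = 1, and {X ∈ n | ∀ Y ∈ n, ξ₀([X,Y]) = 0} = z. -/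
/-!
Trivial isotropy says that the Kirillov form `B(X, Y) = ξ₀ [X, Y]` is nondegenerate, so the
`B`-orthogonal of `n` has dimension at most `dim (g / n) = 1`. It contains the centre `z` of `n`,
which is nonzero because `n` is nilpotent and nonzero (`g` itself cannot be one-dimensional, since
a one-dimensional Lie algebra is abelian). Hence `z` is this orthogonal and is a line. Finally
`[g, z] ≠ 0` because trivial isotropy forces `g` to have trivial centre.
-/
open Module

/-- The centre `{X ∈ n | ∀ Y ∈ n, [X,Y] = 0}` of a Lie ideal `n`, as a submodule of the
ambient Lie algebra `g`. -/
def centreOfIdeal (g : Type*) [LieRing g] [LieAlgebra ℝ g] (n : LieIdeal ℝ g) :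
    Submodule ℝ g where
  carrier := {X | X ∈ n ∧ ∀ Y ∈ n, ⁅X, Y⁆ = 0}
  add_mem' := by
    rintro a b ⟨ha, ha'⟩ ⟨hb, hb'⟩
    exact ⟨add_mem ha hb, fun Y hY => by rw [add_lie, ha' Y hY, hb' Y hY, add_zero]⟩
  zero_mem' := ⟨zero_mem n, fun Y _ => zero_lie Y⟩
  smul_mem' := by
    rintro c x ⟨hx, hx'⟩
    exact ⟨SMulMemClass.smul_mem c hx, fun Y hY => by rw [smul_lie, hx' Y hY, smul_zero]⟩

section Kirillov

variable {K g : Type*} [Field K] [LieRing g] [LieAlgebra K g]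

def kirillovMap (ξ : Dual K g) : g →ₗ[K] Dual K g :=
  (LieAlgebra.ad K g : g →ₗ[K] Module.End K g).compr₂ ξ

@[simp]
lemma kirillovMap_apply (ξ : Dual K g) (X Y : g) : kirillovMap ξ X Y = ξ ⁅X, Y⁆ := rfl

lemma injective_kirillovMap {ξ : Dual K g}
    (hξ : ∀ X : g, (∀ Y : g, ξ ⁅X, Y⁆ = 0) → X = 0) : Function.Injective (kirillovMap ξ) :=
  (injective_iff_map_eq_zero _).mpr fun X hX => hξ X fun Y => LinearMap.congr_fun hX Y

def kirillovOrthogonal (ξ : Dual K g) (U : Submodule K g) : Submodule K g :=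
  U.dualAnnihilator.comap (kirillovMap ξ)

lemma mem_kirillovOrthogonal {ξ : Dual K g} {U : Submodule K g} {X : g} :
    X ∈ kirillovOrthogonal ξ U ↔ ∀ Y ∈ U, ξ ⁅X, Y⁆ = 0 := by
  simp [kirillovOrthogonal, Submodule.mem_dualAnnihilator]

lemma finrank_kirillovOrthogonal_le [FiniteDimensional K g] {ξ : Dual K g}
    (hξ : ∀ X : g, (∀ Y : g, ξ ⁅X, Y⁆ = 0) → X = 0) (U : Submodule K g) :
    finrank K (kirillovOrthogonal ξ U) ≤ finrank K (g ⧸ U) := by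
  rw [(Subspace.quotEquivAnnihilator U).finrank_eq]
  exact LinearMap.finrank_le_finrank_of_injective (f := (kirillovMap ξ).restrict fun _ h => h)
    fun X Y h => Subtype.ext (injective_kirillovMap hξ (congrArg Subtype.val h))

lemma LieAlgebra.center_eq_bot_of_isotropy {ξ : Dual K g}
    (hξ : ∀ X : g, (∀ Y : g, ξ ⁅X, Y⁆ = 0) → X = 0) : LieAlgebra.center K g = ⊥ := by
  refine (LieSubmodule.eq_bot_iff _).mpr fun Z hZ => hξ Z fun Y => ?_
  rw [← lie_skew, hZ Y, neg_zero, map_zero]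

lemma finrank_ne_one_of_isotropy {ξ : Dual K g}
    (hξ : ∀ X : g, (∀ Y : g, ξ ⁅X, Y⁆ = 0) → X = 0) : finrank K g ≠ 1 := by
  intro h
  obtain ⟨v, hv0, hv⟩ := finrank_eq_one_iff'.mp h
  refine hv0 (hξ v fun Y => ?_)
  obtain ⟨c, rfl⟩ := hv Y
  rw [lie_smul, lie_self, smul_zero, map_zero]

end Kirillov

lemma centreOfIdeal_le_kirillovOrthogonal (g : Type*) [LieRing g] [LieAlgebra ℝ g]
    (n : LieIdeal ℝ g) (ξ : Dual ℝ g) : centreOfIdeal g n ≤ kirillovOrthogonal ξ n :=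
  fun X hX => mem_kirillovOrthogonal.mpr fun Y hY => by rw [hX.2 Y hY, map_zero]

lemma centreOfIdeal_ne_bot {g : Type*} [LieRing g] [LieAlgebra ℝ g] {n : LieIdeal ℝ g}
    [LieRing.IsNilpotent n] (hn : n ≠ ⊥) : centreOfIdeal g n ≠ ⊥ := by
  have : Nontrivial n := (LieSubmodule.nontrivial_iff_ne_bot ℝ g g).mpr hn
  have : Nontrivial (LieAlgebra.center ℝ n) := LieAlgebra.non_trivial_center_of_isNilpotent
  obtain ⟨⟨Z, hZ⟩, hZ0⟩ := exists_ne (0 : LieAlgebra.center ℝ n)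
  refine (Submodule.ne_bot_iff _).mpr
    ⟨Z, ⟨Z.2, fun Y hY => ?_⟩, fun h => hZ0 (Subtype.ext (Subtype.ext h))⟩
  rw [← lie_skew, neg_eq_zero]
  exact congrArg Subtype.val (hZ ⟨Y, hY⟩)

/-- Lemma 3.4, (i) ⇒ (ii): if `g` is a finite-dimensional real Lie algebra with a nilpotent Lie
ideal `n` of codimension 1 and `ξ₀ ∈ g*` has trivial coadjoint isotropy, then `[g,z] ≠ 0`,
`dim z = 1` and `n(ξ₀|_n) = z`, where `z` is the centre of `n`. -/
theorem exactSymplectic_implies_flat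
    (g : Type*) [LieRing g] [LieAlgebra ℝ g] [FiniteDimensional ℝ g]
    (n : LieIdeal ℝ g) [LieRing.IsNilpotent ↥n]
    (hcodim : finrank ℝ (g ⧸ n) = 1)
    (ξ₀ : Module.Dual ℝ g)
    (hξ₀ : ∀ X : g, (∀ Y : g, ξ₀ ⁅X, Y⁆ = 0) → X = 0) :
    (∃ X Z : g, Z ∈ centreOfIdeal g n ∧ ⁅X, Z⁆ ≠ 0) ∧
    finrank ℝ (centreOfIdeal g n) = 1 ∧
    {X : g | X ∈ n ∧ ∀ Y ∈ n, ξ₀ ⁅X, Y⁆ = 0} = (centreOfIdeal g n : Set g) := by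
  have hn : n ≠ ⊥ := by
    rintro rfl
    refine finrank_ne_one_of_isotropy hξ₀ ?_
    rwa [← (Submodule.quotEquivOfEqBot (⊥ : LieIdeal ℝ g).toSubmodule (by simp)).finrank_eq]
  have hz : 1 ≤ finrank ℝ (centreOfIdeal g n) :=
    Submodule.one_le_finrank_iff.mpr (centreOfIdeal_ne_bot hn)
  have horth : finrank ℝ (kirillovOrthogonal ξ₀ n) ≤ 1 :=
    hcodim ▸ finrank_kirillovOrthogonal_le hξ₀ n
  have hz_eq : centreOfIdeal g n = kirillovOrthogonal ξ₀ n :=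
    Submodule.eq_of_le_of_finrank_le (centreOfIdeal_le_kirillovOrthogonal g n ξ₀)
      (horth.trans hz)
  refine ⟨?_, le_antisymm (hz_eq ▸ horth) hz, ?_⟩
  · obtain ⟨Z, hZ, hZ0⟩ := Submodule.exists_mem_ne_zero_of_ne_bot (centreOfIdeal_ne_bot hn)
    by_contra! h
    have hZc : Z ∈ LieAlgebra.center ℝ g := fun Y => h Y Z hZ
    exact hZ0 (by simpa [LieAlgebra.center_eq_bot_of_isotropy hξ₀] using hZc)
  · ext X
    exact ⟨fun hX => hz_eq ▸ mem_kirillovOrthogonal.mpr hX.2,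
      fun hX => ⟨hX.1, mem_kirillovOrthogonal.mp (hz_eq ▸ hX)⟩⟩
end

section
/- Let g be a finite-dimensional real Lie algebra and n ⊆ g a nilpotent Lie ideal with dim(g/n) = 1, with centre z := {X ∈ n | ∀ Y ∈ n, [X,Y] = 0}. Assume dim z = 1, [g,z] ≠ {0}, and that there exists a linear functional ℓ on n with {X ∈ n | ∀ Y ∈ n, ℓ([X,Y]) = 0} = z. Then the set of generic points equals the complement of the annihilator of z: {ξ ∈ g* | g(ξ) = {0}} = {ξ ∈ g* | ξ|_z ≠ 0}. -/
/-!
Write `z = ℝ Z₀` and pick `W` with `⁅W, Z₀⁆ = c • Z₀`, `c ≠ 0`; then `W ∉ n` and `g = ℝ W ⊕ n`.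
If `ξ` vanishes on `z`, then `Z₀ ∈ g(ξ)` because `⁅g, z⁆ ⊆ z`. If `ξ Z₀ ≠ 0` and `X ∈ g(ξ)`, then
`ξ ⁅X, Z₀⁆ = 0` forces `X ∈ n`; the restriction `ξ|_n` again has isotropy `z` in `n`, so
`X ∈ z`, and finally `ξ ⁅X, W⁆ = 0` forces `X = 0`.

The isotropy of `ξ|_n` is the nilpotent part. For a functional `σ` on a nilpotent Lie
algebra `𝔫`, let `G(σ) = (σ ⁅e i, e j⁆)` for lifts `e i` of a basis of `𝔫 / 𝔷(𝔫)`. Then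
`det G(σ) ≠ 0` iff `𝔫(σ) = 𝔷(𝔫)`, and `det G` is constant on every coset `σ + 𝔷(𝔫)^⊥`: where
`det G(σ) ≠ 0`, each `η ∈ 𝔷(𝔫)^⊥` has the form `σ ∘ ad Y`, and `G(σ ∘ ad Y) = Aᵀ G(σ) + G(σ) A`
with `A` the nilpotent, hence traceless, matrix of `ad Y` on `𝔫 / 𝔷(𝔫)`. So `t ↦ det G(σ + t η)`
has zero derivative wherever it is nonzero, and a polynomial with this property is constant.
As `ξ|_n` agrees on `z` with a multiple of the given `ℓ`, `det G(ℓ) ≠ 0` gives `det G(ξ|_n) ≠ 0`.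
-/

open Module

open Polynomial Matrix

theorem Polynomial.derivative_eq_zero_of_forall_eval_ne_zero {K : Type*} [Field K] [CharZero K]
    {q : K[X]} (h : ∀ t, q.eval t ≠ 0 → q.derivative.eval t = 0) : q.derivative = 0 := by
  have hprod : q.derivative * q = 0 := Polynomial.funext fun t => by
    by_cases ht : q.eval t = 0 <;> simp [ht, h]
  rcases mul_eq_zero.mp hprod with hq' | rfl
  · exact hq'
  · exact derivative_zero

namespace Matrix

variable {R n : Type*} [CommRing R] [Fintype n] [DecidableEq n]

theorem det_map_add_X_smul_eq (G H : Matrix n n R) (t : R) (hG : IsUnit (G + t • H).det) :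
    det (G.map C + (X : R[X]) • H.map C) =
      C (G + t • H).det * (det (1 + (X : R[X]) • ((G + t • H)⁻¹ * H).map C)).comp (X - C t) := by
  set G' := G + t • H
  have hsplit : G.map C + (X : R[X]) • H.map C =
      G'.map C * (1 + (X - C t) • (G'⁻¹ * H).map C) := by
    rw [mul_add, mul_one, mul_smul_comm, ← Matrix.map_mul, ← Matrix.mul_assoc,
      mul_nonsing_inv _ hG, Matrix.one_mul]
    ext i j : 1
    simp only [G', Matrix.add_apply, map_apply, Matrix.smul_apply, smul_eq_mul, map_add, map_mul]
    ring
  have hcomp : (det (1 + (X : R[X]) • (G'⁻¹ * H).map C)).comp (X - C t) =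
      det (1 + (X - C t) • (G'⁻¹ * H).map C) := by
    rw [← coe_compRingHom_apply, RingHom.map_det, map_add, map_one]
    congr 2
    ext i j : 1
    simp only [RingHom.mapMatrix_apply, coe_compRingHom, map_apply, Matrix.smul_apply, smul_eq_mul,
      mul_comp, X_comp, C_comp]
  rw [hcomp, hsplit, det_mul, RingHom.map_det, RingHom.mapMatrix_apply]

theorem eval_derivative_det_map_add_X_smul (G H : Matrix n n R) (t : R)
    (hG : IsUnit (G + t • H).det) :
    (derivative (det (G.map C + (X : R[X]) • H.map C))).eval t =
      (G + t • H).det * trace ((G + t • H)⁻¹ * H) := by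
  rw [det_map_add_X_smul_eq G H t hG, derivative_C_mul, derivative_comp, eval_mul, eval_C,
    eval_mul, ← derivative_det_one_add_X_smul]
  simp

theorem trace_inv_mul_add_mul_eq {G : Matrix n n R} (hG : IsUnit G.det) (A B : Matrix n n R) :
    trace (G⁻¹ * (B * G + G * A)) = trace B + trace A := by
  rw [Matrix.mul_add, trace_add, ← Matrix.mul_assoc, trace_mul_comm,
    mul_nonsing_inv_cancel_left _ _ hG, nonsing_inv_mul_cancel_left _ _ hG]

end Matrix

namespace LieModule

variable {K L M : Type*} [Field K] [LieRing L] [LieAlgebra K L] [AddCommGroup M] [Module K M]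
  [LieRingModule L M] [LieModule K L M] [IsNilpotent L M]

instance instIsNilpotentQuotient (N : LieSubmodule K L M) : IsNilpotent L (M ⧸ N) :=
  (isNilpotent_quotient_iff K L M N).mpr
    ⟨_, (IsNilpotent.nilpotent K L M).choose_spec.trans_le bot_le⟩

theorem trace_toEnd_eq_zero (x : L) : LinearMap.trace K M (toEnd K L M x) = 0 :=
  (LinearMap.isNilpotent_trace_of_isNilpotent (isNilpotent_toEnd_of_isNilpotent K L M x)).eq_zero

end LieModule

namespace LieAlgebra

variable {K L : Type*} [Field K] [LieRing L] [LieAlgebra K L]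

def kirillovForm (σ : Dual K L) : L →ₗ[K] Dual K L :=
  (LieModule.toEnd K L L : L →ₗ[K] Module.End K L).compr₂ σ

@[simp]
theorem kirillovForm_apply (σ : Dual K L) (x y : L) : kirillovForm σ x y = σ ⁅x, y⁆ := rfl

theorem mem_ker_kirillovForm {σ : Dual K L} {x : L} :
    x ∈ LinearMap.ker (kirillovForm σ) ↔ ∀ y, σ ⁅x, y⁆ = 0 := by
  simp [LinearMap.ext_iff]

theorem apply_lie_eq_zero_of_mem_center (σ : Dual K L) (x : L) {z : L} (hz : z ∈ center K L) :
    σ ⁅x, z⁆ = 0 := by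
  rw [(LieModule.mem_maxTrivSubmodule K L L z).mp hz x, map_zero]

theorem center_le_ker_kirillovForm (σ : Dual K L) :
    (center K L).toSubmodule ≤ LinearMap.ker (kirillovForm σ) := fun z hz =>
  mem_ker_kirillovForm.mpr fun y => by
    rw [← lie_skew, map_neg, apply_lie_eq_zero_of_mem_center σ y hz, neg_zero]

theorem range_kirillovForm_eq_dualAnnihilator [FiniteDimensional K L] {σ : Dual K L}
    (hσ : LinearMap.ker (kirillovForm σ) = (center K L).toSubmodule) :
    LinearMap.range (kirillovForm σ) = (center K L).toSubmodule.dualAnnihilator := by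
  refine Submodule.eq_of_le_of_finrank_eq ?_ ?_
  · rintro _ ⟨x, rfl⟩
    exact (Submodule.mem_dualAnnihilator _).mpr fun z hz =>
      apply_lie_eq_zero_of_mem_center σ x hz
  · have h₁ := (kirillovForm σ).finrank_range_add_finrank_ker
    have h₂ := Subspace.finrank_add_finrank_dualAnnihilator_eq (center K L).toSubmodule
    rw [hσ] at h₁
    omega

variable {ι : Type*}

def kirillovMatrix (e : ι → L) : Dual K L →ₗ[K] Matrix ι ι K where
  toFun σ := Matrix.of fun i j => σ ⁅e i, e j⁆
  map_add' σ τ := by ext; simp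
  map_smul' c σ := by ext; simp

@[simp]
theorem kirillovMatrix_apply (e : ι → L) (σ : Dual K L) (i j : ι) :
    kirillovMatrix e σ i j = σ ⁅e i, e j⁆ := rfl

variable [Fintype ι]

theorem kirillovMatrix_mulVec (e : ι → L) (σ : Dual K L) (v : ι → K) (i : ι) :
    (kirillovMatrix e σ *ᵥ v) i = σ ⁅e i, ∑ j, v j • e j⁆ := by
  simp [mulVec, dotProduct, lie_sum, mul_comm]

section Basis

variable (b : Module.Basis ι K (L ⧸ center K L)) {e : ι → L}
  (he : ∀ i, LieSubmodule.Quotient.mk' _ (e i) = b i)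
include he

theorem apply_lie_eq_sum (σ : Dual K L) (x y : L) :
    σ ⁅x, y⁆ = ∑ j, b.repr (LieSubmodule.Quotient.mk' _ y) j * σ ⁅x, e j⁆ := by
  have hy : y - ∑ j, b.repr (LieSubmodule.Quotient.mk' _ y) j • e j ∈ center K L := by
    rw [← LieSubmodule.Quotient.mk_eq_zero, map_sub, map_sum]
    simp only [map_smul, he, b.sum_repr, sub_self]
  rw [← sub_eq_zero, ← apply_lie_eq_zero_of_mem_center σ x hy]
  simp [lie_sum]

variable [DecidableEq ι]

theorem det_kirillovMatrix_ne_zero_iff (σ : Dual K L) :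
    (kirillovMatrix e σ).det ≠ 0 ↔ LinearMap.ker (kirillovForm σ) = (center K L).toSubmodule := by
  refine ⟨fun hdet => le_antisymm (fun x hx => ?_) (center_le_ker_kirillovForm σ), fun hσ => ?_⟩
  · have hv : kirillovMatrix e σ *ᵥ b.repr (LieSubmodule.Quotient.mk' _ x) = 0 := by
      ext i
      rw [mulVec, dotProduct, Pi.zero_apply]
      simp_rw [kirillovMatrix_apply, mul_comm (σ _), ← apply_lie_eq_sum b he, ← lie_skew (e i) x,
        map_neg, mem_ker_kirillovForm.mp hx, neg_zero]
    rw [LieSubmodule.mem_toSubmodule, ← LieSubmodule.Quotient.mk_eq_zero]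
    exact b.repr.map_eq_zero_iff.mp (Finsupp.ext (congrFun (eq_zero_of_mulVec_eq_zero hdet hv)))
  · rw [Ne, ← exists_mulVec_eq_zero_iff]
    rintro ⟨v, hv0, hv⟩
    have hx : ∑ j, v j • e j ∈ (center K L).toSubmodule := by
      rw [← hσ, mem_ker_kirillovForm]
      intro y
      rw [apply_lie_eq_sum b he]
      refine Finset.sum_eq_zero fun k _ => ?_
      rw [← lie_skew, map_neg, ← kirillovMatrix_mulVec, hv, Pi.zero_apply, neg_zero, mul_zero]
    rw [LieSubmodule.mem_toSubmodule, ← LieSubmodule.Quotient.mk_eq_zero, map_sum] at hx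
    simp only [map_smul, he] at hx
    exact hv0 (funext (Fintype.linearIndependent_iff.mp b.linearIndependent v hx))

theorem kirillovMatrix_kirillovForm (σ : Dual K L) (Y : L) :
    kirillovMatrix e (kirillovForm σ Y) =
      (LinearMap.toMatrix b b (LieModule.toEnd K L (L ⧸ center K L) Y))ᵀ * kirillovMatrix e σ +
        kirillovMatrix e σ * LinearMap.toMatrix b b (LieModule.toEnd K L (L ⧸ center K L) Y) := by
  have hA : ∀ k j, LinearMap.toMatrix b b (LieModule.toEnd K L _ Y) k j =
      b.repr (LieSubmodule.Quotient.mk' _ ⁅Y, e j⁆) k := by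
    intro k j
    rw [LinearMap.toMatrix_apply, LieModule.toEnd_apply_apply, ← he, LieModuleHom.map_lie]
  ext i j
  simp only [kirillovMatrix_apply, kirillovForm_apply, Matrix.add_apply, mul_apply,
    transpose_apply, hA]
  rw [leibniz_lie, map_add, apply_lie_eq_sum b he σ (e i) ⁅Y, e j⁆, ← lie_skew ⁅Y, e i⁆ (e j),
    map_neg, apply_lie_eq_sum b he σ (e j), ← Finset.sum_neg_distrib]
  congr 1 <;> refine Finset.sum_congr rfl fun k _ => ?_
  · rw [← lie_skew (e k) (e j), map_neg, mul_neg]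
  · exact mul_comm _ _

theorem det_kirillovMatrix_add [CharZero K] [FiniteDimensional K L] [LieModule.IsNilpotent L L]
    (σ η : Dual K L) (hη : η ∈ (center K L).toSubmodule.dualAnnihilator) :
    (kirillovMatrix e (σ + η)).det = (kirillovMatrix e σ).det := by
  set q : K[X] := det ((kirillovMatrix e σ).map C + (X : K[X]) • (kirillovMatrix e η).map C)
  have heval : ∀ t, q.eval t = (kirillovMatrix e (σ + t • η)).det := by
    intro t
    rw [← coe_evalRingHom, RingHom.map_det]
    congr 1
    ext i j
    simp only [RingHom.mapMatrix_apply, coe_evalRingHom, map_apply, Matrix.add_apply,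
      Matrix.smul_apply, smul_eq_mul, eval_add, eval_mul, eval_C, eval_X, kirillovMatrix_apply,
      LinearMap.add_apply, LinearMap.smul_apply]
  have hderiv : ∀ t, q.eval t ≠ 0 → q.derivative.eval t = 0 := by
    intro t ht
    rw [heval] at ht
    obtain ⟨Y, hY⟩ : η ∈ LinearMap.range (kirillovForm (σ + t • η)) := by
      rwa [range_kirillovForm_eq_dualAnnihilator ((det_kirillovMatrix_ne_zero_iff b he _).mp ht)]
    have hη' := kirillovMatrix_kirillovForm b he (σ + t • η) Y
    rw [hY] at hη'
    have hG : kirillovMatrix e σ + t • kirillovMatrix e η = kirillovMatrix e (σ + t • η) := by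
      rw [map_add, map_smul]
    rw [eval_derivative_det_map_add_X_smul _ _ t (by rw [hG]; exact ht.isUnit), hG, hη',
      trace_inv_mul_add_mul_eq ht.isUnit, trace_transpose, ← LinearMap.trace_eq_matrix_trace,
      LieModule.trace_toEnd_eq_zero, add_zero, mul_zero]
  have hq := eq_C_of_natDegree_eq_zero
    (derivative_eq_zero.mp (derivative_eq_zero_of_forall_eval_ne_zero hderiv))
  have h₁₀ : q.eval 1 = q.eval 0 := by rw [hq]; simp
  simpa [heval] using h₁₀

end Basis

theorem ker_kirillovForm_eq_center_of_eq_smul_on_center [CharZero K] [FiniteDimensional K L]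
    [LieModule.IsNilpotent L L] {ℓ ρ : Dual K L}
    (hℓ : LinearMap.ker (kirillovForm ℓ) = (center K L).toSubmodule) (s : K)
    (hs : ∀ z ∈ center K L, ℓ z = s * ρ z) :
    LinearMap.ker (kirillovForm ρ) = (center K L).toSubmodule := by
  let b := Module.finBasis K (L ⧸ center K L)
  choose e he using fun i => LieSubmodule.Quotient.surjective_mk' (center K L) (b i)
  rw [← det_kirillovMatrix_ne_zero_iff b he] at hℓ ⊢
  have hη : ℓ - s • ρ ∈ (center K L).toSubmodule.dualAnnihilator :=
    (Submodule.mem_dualAnnihilator _).mpr fun z hz => by simp [hs z hz]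
  rw [← add_sub_cancel (s • ρ) ℓ, det_kirillovMatrix_add b he _ _ hη, map_smul, det_smul] at hℓ
  exact right_ne_zero_of_mul hℓ

end LieAlgebra

theorem Submodule.exists_sub_smul_mem_of_finrank_quotient_eq_one {K V : Type*} [Field K]
    [AddCommGroup V] [Module K V] {p : Submodule K V} (h : finrank K (V ⧸ p) = 1) {w : V}
    (hw : w ∉ p) (v : V) : ∃ t : K, v - t • w ∈ p := by
  have hw' : Submodule.Quotient.mk (p := p) w ≠ 0 := by rwa [Ne, Submodule.Quotient.mk_eq_zero]
  obtain ⟨t, ht⟩ := (finrank_eq_one_iff_of_nonzero' _ hw').mp h (Submodule.Quotient.mk v)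
  exact ⟨t, (Submodule.Quotient.eq p).mp (by rw [Submodule.Quotient.mk_smul, ht])⟩

section CentreOfIdeal

open LieAlgebra Submodule

variable {g : Type*} [LieRing g] [LieAlgebra ℝ g] {n : LieIdeal ℝ g}

theorem lie_mem_centreOfIdeal (X : g) {Z : g} (hZ : Z ∈ centreOfIdeal g n) :
    ⁅X, Z⁆ ∈ centreOfIdeal g n := by
  obtain ⟨hZn, hZc⟩ := hZ
  refine ⟨n.lie_mem hZn, fun Y hY => ?_⟩
  rw [lie_lie, hZc Y hY, lie_zero, hZc ⁅X, Y⁆ (n.lie_mem hY), sub_zero]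

theorem lie_eq_zero_of_mem_centreOfIdeal {Y Z : g} (hY : Y ∈ n) (hZ : Z ∈ centreOfIdeal g n) :
    ⁅Y, Z⁆ = 0 := by
  rw [← lie_skew, hZ.2 Y hY, neg_zero]

theorem coe_mem_centreOfIdeal_iff (X : n) : (X : g) ∈ centreOfIdeal g n ↔ X ∈ center ℝ n := by
  rw [LieModule.mem_maxTrivSubmodule]
  refine ⟨fun h Y => Subtype.ext ?_, fun h => ⟨X.2, fun Y hY => ?_⟩⟩
  · exact (LieSubmodule.coe_bracket n (Y : g) X).trans (lie_eq_zero_of_mem_centreOfIdeal Y.2 h)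
  · rw [← lie_skew, neg_eq_zero]
    exact (LieSubmodule.coe_bracket n Y X).symm.trans (congrArg Subtype.val (h ⟨Y, hY⟩))

theorem ker_kirillovForm_eq_center_iff (ℓ : Dual ℝ n) :
    LinearMap.ker (kirillovForm ℓ) = (center ℝ n).toSubmodule ↔
      {X : n | ∀ Y : n, ℓ ⁅X, Y⁆ = 0} = {X : n | (X : g) ∈ centreOfIdeal g n} := by
  simp only [SetLike.ext_iff, Set.ext_iff, mem_ker_kirillovForm, LieSubmodule.mem_toSubmodule,
    coe_mem_centreOfIdeal_iff, Set.mem_ofPred_eq]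

theorem mem_of_apply_lie_eq_zero (hcodim : finrank ℝ (g ⧸ n) = 1) {W Z₀ : g} {c : ℝ} (hc : c ≠ 0)
    (hZ₀ : Z₀ ∈ centreOfIdeal g n) (hWZ₀ : ⁅W, Z₀⁆ = c • Z₀) {ξ : Dual ℝ g} (hξ : ξ Z₀ ≠ 0)
    {X : g} (hX : ξ ⁅X, Z₀⁆ = 0) : X ∈ n := by
  have hWn : W ∉ n := fun hW => by
    rw [lie_eq_zero_of_mem_centreOfIdeal hW hZ₀, eq_comm, smul_eq_zero] at hWZ₀
    exact hWZ₀.elim hc fun h => hξ (by rw [h, map_zero])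
  obtain ⟨t, ht⟩ := exists_sub_smul_mem_of_finrank_quotient_eq_one hcodim hWn X
  have hXZ₀ : ⁅X, Z₀⁆ = (t * c) • Z₀ := by
    rw [← sub_add_cancel X (t • W), add_lie, lie_eq_zero_of_mem_centreOfIdeal ht hZ₀, zero_add,
      smul_lie, hWZ₀, smul_smul]
  rw [hXZ₀, map_smul, smul_eq_mul] at hX
  have ht0 : t = 0 := by simpa [hc, hξ] using hX
  simpa [ht0] using ht

theorem ker_kirillovForm_comp_subtype_eq_center [FiniteDimensional ℝ g] [LieModule.IsNilpotent n n]
    {ℓ : Dual ℝ n} (hℓ : {X : n | ∀ Y : n, ℓ ⁅X, Y⁆ = 0} = {X : n | (X : g) ∈ centreOfIdeal g n})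
    {Z₀ : g} (hz : centreOfIdeal g n = ℝ ∙ Z₀) {ξ : Dual ℝ g} (hξ : ξ Z₀ ≠ 0) :
    LinearMap.ker (kirillovForm (ξ ∘ₗ n.toSubmodule.subtype)) = (center ℝ n).toSubmodule := by
  have hZ₀n : Z₀ ∈ n := (hz ▸ mem_span_singleton_self Z₀ : Z₀ ∈ centreOfIdeal g n).1
  refine ker_kirillovForm_eq_center_of_eq_smul_on_center ((ker_kirillovForm_eq_center_iff ℓ).mpr hℓ)
    (ℓ ⟨Z₀, hZ₀n⟩ / ξ Z₀) fun z hz' => ?_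
  obtain ⟨a, ha⟩ := mem_span_singleton.mp (hz ▸ (coe_mem_centreOfIdeal_iff z).mpr hz')
  obtain rfl : z = a • ⟨Z₀, hZ₀n⟩ := Subtype.ext ha.symm
  change ℓ (a • _) = ℓ ⟨Z₀, hZ₀n⟩ / ξ Z₀ * ξ (a • Z₀)
  rw [map_smul, map_smul, smul_eq_mul, smul_eq_mul]
  field_simp

end CentreOfIdeal

/-- From the proof of Lemma 3.4, (ii) ⇒ (i-2): under the hypotheses there, the set of generic
linear functionals on `g` (those with trivial coadjoint isotropy) is exactly the set of
functionals not vanishing identically on the centre `z` of `n`. -/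
theorem generic_set_eq_compl_annihilator
    (g : Type*) [LieRing g] [LieAlgebra ℝ g] [FiniteDimensional ℝ g]
    (n : LieIdeal ℝ g) [LieModule.IsNilpotent ↥n ↥n]
    (hcodim : finrank ℝ (g ⧸ n) = 1)
    (hz1 : finrank ℝ (centreOfIdeal g n) = 1)
    (hgz : ∃ X Z : g, Z ∈ centreOfIdeal g n ∧ ⁅X, Z⁆ ≠ 0)
    (hflat : ∃ ℓ : Module.Dual ℝ ↥n,
      {X : ↥n | ∀ Y : ↥n, ℓ ⁅X, Y⁆ = 0} = {X : ↥n | (X : g) ∈ centreOfIdeal g n}) :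
    {ξ : Module.Dual ℝ g | ∀ X : g, (∀ Y : g, ξ ⁅X, Y⁆ = 0) → X = 0} =
      {ξ : Module.Dual ℝ g | ∃ Z ∈ centreOfIdeal g n, ξ Z ≠ 0} := by
  obtain ⟨ℓ, hℓ⟩ := hflat
  obtain ⟨W, Z₀, hZ₀, hWZ₀⟩ := hgz
  have hZ₀ne : Z₀ ≠ 0 := by rintro rfl; exact hWZ₀ (lie_zero W)
  have hz := eq_span_singleton_of_mem_of_finrank_eq_one hz1 hZ₀ hZ₀ne
  obtain ⟨c, hc⟩ := Submodule.mem_span_singleton.mp (hz ▸ lie_mem_centreOfIdeal W hZ₀)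
  have hc0 : c ≠ 0 := by rintro rfl; exact hWZ₀ (by rw [← hc, zero_smul])
  ext ξ
  simp only [Set.mem_ofPred_eq]
  refine ⟨fun hgen => ?_, fun ⟨Z, hZ, hξZ⟩ X hX => ?_⟩
  · by_contra! h
    refine hZ₀ne (hgen Z₀ fun Y => ?_)
    rw [← lie_skew, map_neg, h _ (lie_mem_centreOfIdeal Y hZ₀), neg_zero]
  have hξZ₀ : ξ Z₀ ≠ 0 := by
    obtain ⟨a, rfl⟩ := Submodule.mem_span_singleton.mp (hz ▸ hZ)
    exact right_ne_zero_of_mul (by simpa using hξZ)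
  have hXn := mem_of_apply_lie_eq_zero hcodim hc0 hZ₀ hc.symm hξZ₀ (hX Z₀)
  have hXz : X ∈ centreOfIdeal g n := by
    rw [coe_mem_centreOfIdeal_iff ⟨X, hXn⟩, ← LieSubmodule.mem_toSubmodule,
      ← ker_kirillovForm_comp_subtype_eq_center hℓ hz hξZ₀, LieAlgebra.mem_ker_kirillovForm]
    exact fun Y => hX Y
  obtain ⟨s, rfl⟩ := Submodule.mem_span_singleton.mp (hz ▸ hXz)
  have hsW := hX W
  rw [smul_lie, ← lie_skew, ← hc, map_smul, map_neg, map_smul, smul_eq_mul, smul_eq_mul] at hsW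
  rw [show s = 0 by simpa [hc0, hξZ₀] using hsW, zero_smul]
end

section
/- Let h be the 6-dimensional real Lie algebra with basis X₁,X₂,X₃,Y₁,Y₂,Y₃ and brackets [X₁,X₂] = Y₃, [X₂,X₃] = Y₁, [X₃,X₁] = Y₂, all other brackets of basis elements zero. Given a₁,a₂,a₃ ∈ ℝ, let ω : h × h → ℝ be the (unique) skew-symmetric bilinear form with ω(X_j,Y_k) = δ_{jk} a_j and ω(X_j,X_k) = ω(Y_j,Y_k) = 0 for all j,k ∈ {1,2,3}. Then ω is a symplectic structure on the Lie algebra h — that is, ω is nondegenerate and satisfies the 2-cocycle identity ω([u,v],w) + ω([v,w],u) + ω([w,u],v) = 0 for all u,v,w ∈ h — if and only if a₁ + a₂ + a₃ = 0 and a₁a₂a₃ ≠ 0. -/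
/-!
In the basis `(X, Y)` the Gram matrix of `ω` is `J * diagonal (-a, -a)`, with `J` the standard
symplectic matrix, so `ω` is nondegenerate exactly when no `aⱼ` vanishes. The cyclic sum
`ω ⁅u, v⁆ w + ω ⁅v, w⁆ u + ω ⁅w, u⁆ v` is trilinear, hence determined by its values on basis
triples. The `Yₖ` are central and `ω` vanishes on pairs of them, so only triples of `Xⱼ`
contribute, and those give `0` or `±(a₁ + a₂ + a₃)`.
-/

section Nondegenerate

variable {K V ι : Type*} [Field K] [AddCommGroup V] [Module K V] [Fintype ι] [DecidableEq ι]

open Matrix in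
theorem separatingLeft_iff_prod_ne_zero {X Y : ι → V}
    (hindep : LinearIndependent K (Sum.elim X Y))
    (hspan : Submodule.span K (Set.range (Sum.elim X Y)) = ⊤)
    (a : ι → K) (ω : V →ₗ[K] V →ₗ[K] K)
    (hskew : ∀ u v : V, ω u v = -ω v u)
    (hωXY : ∀ j k, ω (X j) (Y k) = if j = k then a j else 0)
    (hωXX : ∀ j k, ω (X j) (X k) = 0)
    (hωYY : ∀ j k, ω (Y j) (Y k) = 0) :
    ω.SeparatingLeft ↔ ∏ j, a j ≠ 0 := by
  let B := Module.Basis.mk hindep hspan.ge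
  have hgram : LinearMap.toMatrix₂ B B ω = J ι K * diagonal (Sum.elim (-a) (-a)) := by
    ext (j | j) (k | k) <;>
      simp [B, J, LinearMap.toMatrix₂_apply, hωXX, hωYY, hωXY, hskew (Y j), one_apply]
        <;> grind
  rw [LinearMap.separatingLeft_iff_det_ne_zero B, hgram, det_mul, det_diagonal,
    Ne, (isUnit_det_J ι K).mul_right_eq_zero, Fintype.prod_sum_type]
  simp [Finset.prod_neg]

end Nondegenerate

section CyclicForm

variable {R L : Type*} [CommRing R] [LieRing L] [LieAlgebra R L]

def lieCyclicForm (ω : L →ₗ[R] L →ₗ[R] R) : L →ₗ[R] L →ₗ[R] L →ₗ[R] R := by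
  refine LinearMap.mk₂ R (fun u v =>
    { toFun := fun w => ω ⁅u, v⁆ w + ω ⁅v, w⁆ u + ω ⁅w, u⁆ v
      map_add' := ?_
      map_smul' := ?_ }) ?_ ?_ ?_ ?_
  all_goals
    intros
    try ext
    simp only [lie_add, add_lie, lie_smul, smul_lie, map_add, map_smul, LinearMap.add_apply,
      LinearMap.smul_apply, smul_eq_mul, RingHom.id_apply, LinearMap.coe_mk, AddHom.coe_mk]
    ring

@[simp]
theorem lieCyclicForm_apply (ω : L →ₗ[R] L →ₗ[R] R) (u v w : L) :
    lieCyclicForm ω u v w = ω ⁅u, v⁆ w + ω ⁅v, w⁆ u + ω ⁅w, u⁆ v :=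
  rfl

theorem lieCyclicForm_apply_rotate (ω : L →ₗ[R] L →ₗ[R] R) (u v w : L) :
    lieCyclicForm ω u v w = lieCyclicForm ω v w u := by
  simp only [lieCyclicForm_apply]; ring

theorem lieCyclicForm_eq_zero_of_basis {ι : Type*} {b : ι → L}
    (hb : Submodule.span R (Set.range b) = ⊤) {ω : L →ₗ[R] L →ₗ[R] R}
    (h : ∀ i j k, lieCyclicForm ω (b i) (b j) (b k) = 0) : lieCyclicForm ω = 0 :=
  LinearMap.ext_on_range hb fun i => LinearMap.ext_on_range hb fun j =>
    LinearMap.ext_on_range hb fun k => h i j k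

end CyclicForm

section FreeTwoStep

variable {L : Type*} [LieRing L] [LieAlgebra ℝ L]

theorem lieCyclicForm_X_012 {X Y : Fin 3 → L}
    (h12 : ⁅X 0, X 1⁆ = Y 2) (h23 : ⁅X 1, X 2⁆ = Y 0) (h31 : ⁅X 2, X 0⁆ = Y 1)
    (a : Fin 3 → ℝ) (ω : L →ₗ[ℝ] L →ₗ[ℝ] ℝ) (hskew : ∀ u v : L, ω u v = -ω v u)
    (hωXY : ∀ j k, ω (X j) (Y k) = if j = k then a j else 0) :
    lieCyclicForm ω (X 0) (X 1) (X 2) = -(a 0 + a 1 + a 2) := by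
  simp only [lieCyclicForm_apply, h12, h23, h31, hskew (Y _), hωXY, if_pos]
  ring

theorem lieCyclicForm_X_X_X_eq_zero {X Y : Fin 3 → L}
    (h12 : ⁅X 0, X 1⁆ = Y 2) (h23 : ⁅X 1, X 2⁆ = Y 0) (h31 : ⁅X 2, X 0⁆ = Y 1)
    {a : Fin 3 → ℝ} (hsum : a 0 + a 1 + a 2 = 0) (ω : L →ₗ[ℝ] L →ₗ[ℝ] ℝ)
    (hskew : ∀ u v : L, ω u v = -ω v u)
    (hωXY : ∀ j k, ω (X j) (Y k) = if j = k then a j else 0) (i j k : Fin 3) :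
    lieCyclicForm ω (X i) (X j) (X k) = 0 := by
  have h21 : ⁅X 1, X 0⁆ = -Y 2 := by rw [← lie_skew, h12]
  have h32 : ⁅X 2, X 1⁆ = -Y 0 := by rw [← lie_skew, h23]
  have h13 : ⁅X 0, X 2⁆ = -Y 1 := by rw [← lie_skew, h31]
  fin_cases i <;> fin_cases j <;> fin_cases k <;>
    simp [h12, h23, h31, h21, h32, h13, hskew (Y _), hωXY] <;> linarith

theorem lieCyclicForm_apply_Y_eq_zero {X Y : Fin 3 → L}
    (h12 : ⁅X 0, X 1⁆ = Y 2) (h23 : ⁅X 1, X 2⁆ = Y 0) (h31 : ⁅X 2, X 0⁆ = Y 1)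
    (hXY : ∀ i j, ⁅X i, Y j⁆ = 0) (hYY : ∀ i j, ⁅Y i, Y j⁆ = 0)
    (ω : L →ₗ[ℝ] L →ₗ[ℝ] ℝ) (hωYY : ∀ j k, ω (Y j) (Y k) = 0) (i j : Fin 3 ⊕ Fin 3)
    (k : Fin 3) : lieCyclicForm ω (Sum.elim X Y i) (Sum.elim X Y j) (Y k) = 0 := by
  have hcentral : ∀ k i, ⁅Y k, Sum.elim X Y i⁆ = 0 := by
    rintro k (i | i)
    · rw [Sum.elim_inl, ← lie_skew, hXY, neg_zero]
    · exact hYY k i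
  have hcentral' : ⁅Sum.elim X Y j, Y k⁆ = 0 := by rw [← lie_skew, hcentral, neg_zero]
  have hbracket : ω ⁅Sum.elim X Y i, Sum.elim X Y j⁆ (Y k) = 0 := by
    rcases i with i | i
    · rcases j with j | j
      · have h21 : ⁅X 1, X 0⁆ = -Y 2 := by rw [← lie_skew, h12]
        have h32 : ⁅X 2, X 1⁆ = -Y 0 := by rw [← lie_skew, h23]
        have h13 : ⁅X 0, X 2⁆ = -Y 1 := by rw [← lie_skew, h31]
        fin_cases i <;> fin_cases j <;> simp [h12, h23, h31, h21, h32, h13, hωYY]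
      · simp [hXY]
    · rw [Sum.elim_inr, hcentral, map_zero, LinearMap.zero_apply]
  simp only [lieCyclicForm_apply, hbracket, hcentral', hcentral, map_zero, LinearMap.zero_apply,
    add_zero]

theorem lieCyclicForm_basis_eq_zero {X Y : Fin 3 → L}
    (h12 : ⁅X 0, X 1⁆ = Y 2) (h23 : ⁅X 1, X 2⁆ = Y 0) (h31 : ⁅X 2, X 0⁆ = Y 1)
    (hXY : ∀ i j, ⁅X i, Y j⁆ = 0) (hYY : ∀ i j, ⁅Y i, Y j⁆ = 0)
    {a : Fin 3 → ℝ} (hsum : a 0 + a 1 + a 2 = 0) (ω : L →ₗ[ℝ] L →ₗ[ℝ] ℝ)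
    (hskew : ∀ u v : L, ω u v = -ω v u)
    (hωXY : ∀ j k, ω (X j) (Y k) = if j = k then a j else 0)
    (hωYY : ∀ j k, ω (Y j) (Y k) = 0) (i j k : Fin 3 ⊕ Fin 3) :
    lieCyclicForm ω (Sum.elim X Y i) (Sum.elim X Y j) (Sum.elim X Y k) = 0 := by
  have hY := lieCyclicForm_apply_Y_eq_zero h12 h23 h31 hXY hYY ω hωYY
  rcases k with k | k
  · rcases j with j | j
    · rcases i with i | i
      · exact lieCyclicForm_X_X_X_eq_zero h12 h23 h31 hsum ω hskew hωXY i j k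
      · rw [lieCyclicForm_apply_rotate]
        exact hY (.inl j) (.inl k) i
    · rw [← lieCyclicForm_apply_rotate]
      exact hY (.inl k) i j
  · exact hY i j k

theorem cocycle_iff_sum_eq_zero {X Y : Fin 3 → L}
    (hspan : Submodule.span ℝ (Set.range (Sum.elim X Y)) = ⊤)
    (h12 : ⁅X 0, X 1⁆ = Y 2) (h23 : ⁅X 1, X 2⁆ = Y 0) (h31 : ⁅X 2, X 0⁆ = Y 1)
    (hXY : ∀ i j, ⁅X i, Y j⁆ = 0) (hYY : ∀ i j, ⁅Y i, Y j⁆ = 0)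
    (a : Fin 3 → ℝ) (ω : L →ₗ[ℝ] L →ₗ[ℝ] ℝ) (hskew : ∀ u v : L, ω u v = -ω v u)
    (hωXY : ∀ j k, ω (X j) (Y k) = if j = k then a j else 0)
    (hωYY : ∀ j k, ω (Y j) (Y k) = 0) :
    (∀ u v w : L, ω ⁅u, v⁆ w + ω ⁅v, w⁆ u + ω ⁅w, u⁆ v = 0) ↔ a 0 + a 1 + a 2 = 0 := by
  constructor
  · intro hcocycle
    have h := hcocycle (X 0) (X 1) (X 2)
    rwa [← lieCyclicForm_apply, lieCyclicForm_X_012 h12 h23 h31 a ω hskew hωXY,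
      neg_eq_zero] at h
  · intro hsum u v w
    have h := lieCyclicForm_eq_zero_of_basis hspan
      (lieCyclicForm_basis_eq_zero h12 h23 h31 hXY hYY hsum ω hskew hωXY hωYY)
    simpa using congr($h u v w)

end FreeTwoStep

/-- Lemma 4.8(ii): let `h` be the free 2-step nilpotent real Lie algebra on three generators,
with basis `X₁,X₂,X₃,Y₁,Y₂,Y₃` satisfying `[X₁,X₂] = Y₃`, `[X₂,X₃] = Y₁`, `[X₃,X₁] = Y₂` and
all other brackets of basis elements zero.  Given `a₁,a₂,a₃ ∈ ℝ`, the skew-symmetric bilinear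
form `ω` with `ω(Xⱼ,Yₖ) = δⱼₖ aⱼ` and `ω(Xⱼ,Xₖ) = ω(Yⱼ,Yₖ) = 0` is a symplectic structure on
the Lie algebra `h` (i.e. nondegenerate and a 2-cocycle) if and only if `a₁ + a₂ + a₃ = 0` and
`a₁a₂a₃ ≠ 0`. -/
theorem free2step_symplectic_iff
    (h : Type*) [LieRing h] [LieAlgebra ℝ h]
    (X Y : Fin 3 → h)
    (hindep : LinearIndependent ℝ (Sum.elim X Y))
    (hspan : Submodule.span ℝ (Set.range (Sum.elim X Y)) = ⊤)
    (h12 : ⁅X 0, X 1⁆ = Y 2) (h23 : ⁅X 1, X 2⁆ = Y 0) (h31 : ⁅X 2, X 0⁆ = Y 1)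
    (hXY : ∀ i j, ⁅X i, Y j⁆ = 0) (hYY : ∀ i j, ⁅Y i, Y j⁆ = 0)
    (a : Fin 3 → ℝ)
    (ω : h →ₗ[ℝ] h →ₗ[ℝ] ℝ)
    (hskew : ∀ u v : h, ω u v = -ω v u)
    (hωXY : ∀ j k, ω (X j) (Y k) = if j = k then a j else 0)
    (hωXX : ∀ j k, ω (X j) (X k) = 0)
    (hωYY : ∀ j k, ω (Y j) (Y k) = 0) :
    ((∀ u : h, (∀ v : h, ω u v = 0) → u = 0) ∧
      (∀ u v w : h, ω ⁅u, v⁆ w + ω ⁅v, w⁆ u + ω ⁅w, u⁆ v = 0)) ↔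
    (a 0 + a 1 + a 2 = 0 ∧ a 0 * a 1 * a 2 ≠ 0) := by
  have hnondeg : ω.SeparatingLeft ↔ a 0 * a 1 * a 2 ≠ 0 := by
    rw [separatingLeft_iff_prod_ne_zero hindep hspan a ω hskew hωXY hωXX hωYY,
      Fin.prod_univ_three]
  rw [cocycle_iff_sum_eq_zero hspan h12 h23 h31 hXY hYY a ω hskew hωXY hωYY]
  exact (hnondeg.and Iff.rfl).trans and_comm
end

section
/- Let h be the 6-dimensional real Lie algebra with basis X₁,X₂,X₃,Y₁,Y₂,Y₃ and brackets [X₁,X₂] = Y₃, [X₂,X₃] = Y₁, [X₃,X₁] = Y₂, all other brackets of basis elements zero. Let a₁,a₂,a₃ ∈ ℝ with a₁ + a₂ + a₃ = 0 and a₁a₂a₃ ≠ 0, and let ω be the skew-symmetric bilinear form on h with ω(X_j,Y_k) = δ_{jk} a_j, ω(X_j,X_k) = ω(Y_j,Y_k) = 0. Let B = (b_{jk}) ∈ M₃(ℝ) and let D_B be the unique derivation of h with D_B(X_j) = Σ_k b_{jk} X_k. Then there exists a₀ ∈ ℝ such that ω(D_B u, v) + ω(u, D_B v) = a₀·ω(u,v)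 for all u,v ∈ h if and only if b_{ij}(a_i − a_j) = 0 for all i,j ∈ {1,2,3}; and in that case necessarily a₀ = Tr B. -/
/-- Lemma 4.8(iii), second part: with `h` the free 2-step nilpotent real Lie algebra on three
generators, `ω` the symplectic form determined by `a₁,a₂,a₃` (where `a₁+a₂+a₃ = 0` and
`a₁a₂a₃ ≠ 0`), and `D_B` the derivation determined by a matrix `B ∈ M₃(ℝ)`, there exists
`a₀ ∈ ℝ` with `ω(D_B u, v) + ω(u, D_B v) = a₀ ω(u,v)` for all `u,v` if and only if
`b_{ij}(a_i − a_j) = 0` for all `i,j`; and in that case necessarily `a₀ = Tr B`. -/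
theorem free2step_derivation_extends_iff
    (h : Type*) [LieRing h] [LieAlgebra ℝ h]
    (X Y : Fin 3 → h)
    (hindep : LinearIndependent ℝ (Sum.elim X Y))
    (hspan : Submodule.span ℝ (Set.range (Sum.elim X Y)) = ⊤)
    (h12 : ⁅X 0, X 1⁆ = Y 2) (h23 : ⁅X 1, X 2⁆ = Y 0) (h31 : ⁅X 2, X 0⁆ = Y 1)
    (hXY : ∀ i j, ⁅X i, Y j⁆ = 0) (hYY : ∀ i j, ⁅Y i, Y j⁆ = 0)
    (a : Fin 3 → ℝ)
    (ha : a 0 + a 1 + a 2 = 0) (ha' : a 0 * a 1 * a 2 ≠ 0)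
    (ω : h →ₗ[ℝ] h →ₗ[ℝ] ℝ)
    (hskew : ∀ u v : h, ω u v = -ω v u)
    (hωXY : ∀ j k, ω (X j) (Y k) = if j = k then a j else 0)
    (hωXX : ∀ j k, ω (X j) (X k) = 0)
    (hωYY : ∀ j k, ω (Y j) (Y k) = 0)
    (B : Matrix (Fin 3) (Fin 3) ℝ)
    (D : LieDerivation ℝ h h)
    (hD : ∀ j, D (X j) = ∑ k, B j k • X k) :
    ((∃ a₀ : ℝ, ∀ u v : h, ω (D u) v + ω u (D v) = a₀ * ω u v) ↔
      ∀ i j, B i j * (a i - a j) = 0) ∧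
    (∀ a₀ : ℝ, (∀ u v : h, ω (D u) v + ω u (D v) = a₀ * ω u v) → a₀ = B.trace) := by
  have ha0 : a 0 ≠ 0 := fun h0 => ha' (by rw [h0]; ring)
  -- bracket auxiliary facts
  have h21 : ⁅X 1, X 0⁆ = -Y 2 := by rw [← lie_skew, h12]
  have h32 : ⁅X 2, X 1⁆ = -Y 0 := by rw [← lie_skew, h23]
  have h03 : ⁅X 0, X 2⁆ = -Y 1 := by rw [← lie_skew, h31]
  -- values of D on the Y's
  have hDY : ∀ j, D (Y j) = B.trace • Y j - ∑ i, B i j • Y i := by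
    have tr3 : B.trace = B 0 0 + B 1 1 + B 2 2 := by
      simp [Matrix.trace_fin_three]
    have e0 : D (Y 0) = B.trace • Y 0 - ∑ i, B i 0 • Y i := by
      rw [← h23, D.apply_lie_eq_add, hD 1, hD 2, tr3]
      simp only [Fin.sum_univ_three, add_lie, lie_add, smul_lie, lie_smul,
        h12, h23, h31, h21, h32, h03, lie_self]
      module
    have e1 : D (Y 1) = B.trace • Y 1 - ∑ i, B i 1 • Y i := by
      rw [← h31, D.apply_lie_eq_add, hD 2, hD 0, tr3]
      simp only [Fin.sum_univ_three, add_lie, lie_add, smul_lie, lie_smul,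
        h12, h23, h31, h21, h32, h03, lie_self]
      module
    have e2 : D (Y 2) = B.trace • Y 2 - ∑ i, B i 2 • Y i := by
      rw [← h12, D.apply_lie_eq_add, hD 0, hD 1, tr3]
      simp only [Fin.sum_univ_three, add_lie, lie_add, smul_lie, lie_smul,
        h12, h23, h31, h21, h32, h03, lie_self]
      module
    intro j
    fin_cases j
    · exact e0
    · exact e1
    · exact e2
  -- key computation on basis pairs (X i, Y j)
  have key : ∀ i j, ω (D (X i)) (Y j) + ω (X i) (D (Y j))
      = B i j * (a j - a i) + (if i = j then B.trace * a i else 0) := by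
    intro i j
    rw [hD i, hDY j]
    simp only [Fin.sum_univ_three, map_add, map_smul, map_sub, LinearMap.add_apply,
      LinearMap.smul_apply, LinearMap.sub_apply, LinearMap.sum_apply, map_sum,
      smul_eq_mul, hωXY]
    fin_cases i <;> fin_cases j <;> simp <;> ring
  have keyXX : ∀ i j, ω (D (X i)) (X j) + ω (X i) (D (X j)) = 0 := by
    intro i j
    rw [hD i, hD j]
    simp [Fin.sum_univ_three, hωXX]
  have keyYY : ∀ i j, ω (D (Y i)) (Y j) + ω (Y i) (D (Y j)) = 0 := by
    intro i j
    rw [hDY i, hDY j]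
    simp [Fin.sum_univ_three, hωYY]
  -- the trace statement
  have htr : ∀ a₀ : ℝ, (∀ u v : h, ω (D u) v + ω u (D v) = a₀ * ω u v) → a₀ = B.trace := by
    intro a₀ hF
    have h00 := hF (X 0) (Y 0)
    rw [key 0 0] at h00
    simp only [if_pos rfl, hωXY, sub_self, mul_zero, zero_add] at h00
    exact mul_right_cancel₀ ha0 h00.symm
  refine ⟨⟨?_, ?_⟩, htr⟩
  · rintro ⟨a₀, hF⟩ i j
    by_cases hij : i = j
    · simp [hij]
    · have := hF (X i) (Y j)
      rw [key i j, if_neg hij, hωXY, if_neg hij, mul_zero, add_zero] at this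
      linarith [this]
  · intro hB
    refine ⟨B.trace, ?_⟩
    have hB' : ∀ i j, B i j * (a j - a i) = 0 := by
      intro i j; have := hB i j; linarith [this]
    -- package as bilinear map and use the spanning set
    set G : h →ₗ[ℝ] h →ₗ[ℝ] ℝ :=
      (ω ∘ₗ (D : h →ₗ[ℝ] h)) + ((ω.flip ∘ₗ (D : h →ₗ[ℝ] h)).flip) - B.trace • ω with hG
    have hGval : ∀ u v : h, G u v = ω (D u) v + ω u (D v) - B.trace * ω u v := by
      intro u v
      simp [hG, LinearMap.flip_apply]
    have hGskew : ∀ u v : h, G u v = -G v u := by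
      intro u v
      rw [hGval, hGval, hskew (D u) v, hskew u (D v), hskew u v]
      ring
    have hGzero : G = 0 := by
      apply LinearMap.ext_on hspan
      rintro x ⟨s, rfl⟩
      apply LinearMap.ext_on hspan
      rintro y ⟨t, rfl⟩
      have hXYcase : ∀ i j, G (X i) (Y j) = 0 := by
        intro i j
        rw [hGval, key i j, hωXY, hB' i j]
        by_cases hij : i = j <;> simp [hij]
      cases s with
      | inl i =>
        cases t with
        | inl j =>
          simp only [Sum.elim_inl, LinearMap.zero_apply]
          rw [hGval, keyXX i j, hωXX]; ring
        | inr j =>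
          simpa using hXYcase i j
      | inr i =>
        cases t with
        | inl j =>
          simp only [Sum.elim_inr, Sum.elim_inl, LinearMap.zero_apply]
          rw [hGskew, hXYcase j i, neg_zero]
        | inr j =>
          simp only [Sum.elim_inr, LinearMap.zero_apply]
          rw [hGval, keyYY i j, hωYY]; ring
    intro u v
    have := DFunLike.congr_fun (DFunLike.congr_fun hGzero u) v
    simp only [LinearMap.zero_apply] at this
    rw [hGval] at this
    linarith [this]
end

section
/- Let K be a finite-dimensional real division algebra, n ≥ 1, and h_K = K^n × K^n × K the 2-step nilpotent real Lie algebra with bracket [(v₁,w₁,z₁),(v₂,w₂,z₂)] = (0, 0, Σ_{k=1}^n (v_{1k}·w_{2k} − v_{2k}·w_{1k})), with z := {0} × {0} × K. Then for every ℝ-linear functional ξ on h_K that does not vanish identically on z, the isotropy subalgebra h_K(ξ) := {x ∈ h_K | ∀ y ∈ h_K, ξ([x,y]) = 0} equals z; consequently dim h_K − dim h_K(ξ) = 2n·dim_ℝ K. -/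
/-- The underlying vector space `K^n × K^n × K` of the Heisenberg-like Lie algebra attached to
a bilinear multiplication `m` on `K`. -/
def HK (K : Type*) [AddCommGroup K] [Module ℝ K] (m : K →ₗ[ℝ] K →ₗ[ℝ] K) (n : ℕ) :
    Type _ :=
  (Fin n → K) × (Fin n → K) × K

section Instances

variable {K : Type*} [AddCommGroup K] [Module ℝ K] (m : K →ₗ[ℝ] K →ₗ[ℝ] K) (n : ℕ)

instance : AddCommGroup (HK K m n) :=
  inferInstanceAs (AddCommGroup ((Fin n → K) × (Fin n → K) × K))

instance : Module ℝ (HK K m n) :=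
  inferInstanceAs (Module ℝ ((Fin n → K) × (Fin n → K) × K))

/-- The third-coordinate (central) embedding `K → HK K m n`. -/
def HK.z (c : K) : HK K m n := ((0 : Fin n → K), (0 : Fin n → K), c)

lemma HK.z_add (c d : K) : (HK.z m n (c + d)) = HK.z m n c + HK.z m n d := by
  show ((0 : Fin n → K), (0 : Fin n → K), c + d)
    = ((0 : Fin n → K), (0 : Fin n → K), c) + ((0 : Fin n → K), (0 : Fin n → K), d)
  simp [Prod.mk_add_mk]

/-- The scalar part of the bracket on `HK K m n`. -/
def HK.br (x y : HK K m n) : K :=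
  ∑ k, (m (x.1 k) (y.2.1 k) - m (y.1 k) (x.2.1 k))

lemma HK.br_add_left (x y z : HK K m n) :
    HK.br m n (x + y) z = HK.br m n x z + HK.br m n y z := by
  unfold HK.br
  rw [← Finset.sum_add_distrib]
  refine Finset.sum_congr rfl fun k _ => ?_
  show m ((x.1 + y.1) k) (z.2.1 k) - m (z.1 k) ((x.2.1 + y.2.1) k) = _
  simp only [Pi.add_apply, map_add, LinearMap.add_apply]
  abel

lemma HK.br_add_right (x y z : HK K m n) :
    HK.br m n x (y + z) = HK.br m n x y + HK.br m n x z := by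
  unfold HK.br
  rw [← Finset.sum_add_distrib]
  refine Finset.sum_congr rfl fun k _ => ?_
  show m (x.1 k) ((y.2.1 + z.2.1) k) - m ((y.1 + z.1) k) (x.2.1 k) = _
  simp only [Pi.add_apply, map_add, LinearMap.add_apply]
  abel

lemma HK.br_z_left (c : K) (y : HK K m n) : HK.br m n (HK.z m n c) y = 0 := by
  unfold HK.br HK.z
  simp

lemma HK.br_z_right (c : K) (y : HK K m n) : HK.br m n y (HK.z m n c) = 0 := by
  unfold HK.br HK.z
  simp

instance : LieRing (HK K m n) where
  bracket x y := HK.z m n (HK.br m n x y)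
  add_lie x y z := by
    show HK.z m n (HK.br m n (x + y) z) = HK.z m n (HK.br m n x z) + HK.z m n (HK.br m n y z)
    rw [← HK.z_add, ← HK.br_add_left]
  lie_add x y z := by
    show HK.z m n (HK.br m n x (y + z)) = HK.z m n (HK.br m n x y) + HK.z m n (HK.br m n x z)
    rw [← HK.z_add, ← HK.br_add_right]
  lie_self x := by
    show HK.z m n (HK.br m n x x) = 0
    have : HK.br m n x x = 0 := by unfold HK.br; simp
    rw [this]; rfl
  leibniz_lie x y z := by
    show HK.z m n (HK.br m n x (HK.z m n (HK.br m n y z))) =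
      HK.z m n (HK.br m n (HK.z m n (HK.br m n x y)) z) +
        HK.z m n (HK.br m n y (HK.z m n (HK.br m n x z)))
    rw [HK.br_z_right, HK.br_z_left, HK.br_z_right, ← HK.z_add, add_zero]

instance : LieAlgebra ℝ (HK K m n) where
  lie_smul c x y := by
    show HK.z m n (HK.br m n x (c • y)) = c • HK.z m n (HK.br m n x y)
    have h1 : HK.br m n x (c • y) = c • HK.br m n x y := by
      unfold HK.br
      rw [Finset.smul_sum]
      refine Finset.sum_congr rfl fun k _ => ?_
      show m (x.1 k) ((c • y.2.1) k) - m ((c • y.1) k) (x.2.1 k) = _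
      simp only [Pi.smul_apply, map_smul, LinearMap.smul_apply, smul_sub]
    rw [h1]
    show ((0 : Fin n → K), (0 : Fin n → K), c • HK.br m n x y)
      = c • ((0 : Fin n → K), (0 : Fin n → K), HK.br m n x y)
    simp [Prod.smul_mk]

/-- The subspace `z = {0} × {0} × K` of `HK K m n`. -/
def HK.centre : Submodule ℝ (HK K m n) where
  carrier := {x | ∃ c : K, x = HK.z m n c}
  add_mem' := by
    rintro x y ⟨c, rfl⟩ ⟨d, rfl⟩
    exact ⟨c + d, (HK.z_add m n c d).symm⟩
  zero_mem' := ⟨0, rfl⟩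
  smul_mem' := by
    rintro r x ⟨c, rfl⟩
    refine ⟨r • c, ?_⟩
    show r • ((0 : Fin n → K), (0 : Fin n → K), c) = ((0 : Fin n → K), (0 : Fin n → K), r • c)
    simp [Prod.smul_mk]


/-- The coadjoint isotropy subalgebra `{x | ∀ y, ξ [x,y] = 0}` of a linear functional `ξ` on a
Lie algebra, as a submodule. -/
def coadjointIsotropy {R L : Type*} [CommRing R] [LieRing L] [LieAlgebra R L]
    (ξ : Module.Dual R L) : Submodule R L where
  carrier := {x | ∀ y : L, ξ ⁅x, y⁆ = 0}
  add_mem' := by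
    intro x y hx hy z
    rw [add_lie, map_add, hx z, hy z, add_zero]
  zero_mem' := by
    intro z
    rw [zero_lie, map_zero]
  smul_mem' := by
    intro c x hx z
    rw [smul_lie, map_smul, hx z, smul_zero]



end Instances

/-!
If `x = (v, w, c)` is isotropic for `ξ`, bracketing `x` with `(0, e_k a, 0)` and `(e_k a, 0, 0)`
shows that `ξ` vanishes on the central elements `(0, 0, v_k a)` and `(0, 0, a w_k)` for all `a`.
When `v_k ≠ 0`, left multiplication by `v_k` is injective, hence surjective since `K` is
finite-dimensional, so `ξ` would vanish on the whole centre; thus `v = 0`, and likewise `w = 0`.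
The centre is always isotropic because the bracket takes values in it and vanishes on it.
-/

namespace HK

variable {K : Type*} [AddCommGroup K] [Module ℝ K] (m : K →ₗ[ℝ] K →ₗ[ℝ] K) (n : ℕ)

def zₗ : K →ₗ[ℝ] HK K m n :=
  (LinearMap.inr ℝ (Fin n → K) ((Fin n → K) × K)).comp (LinearMap.inr ℝ (Fin n → K) K)

lemma zₗ_apply (c : K) : zₗ m n c = HK.z m n c := rfl

lemma zₗ_injective : Function.Injective (zₗ m n) := fun _ _ h => congrArg (fun x => x.2.2) h

lemma centre_eq_range_zₗ : centre m n = LinearMap.range (zₗ m n) := by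
  ext x
  exact ⟨fun ⟨c, hc⟩ => ⟨c, hc.symm⟩, fun ⟨c, hc⟩ => ⟨c, hc.symm⟩⟩

lemma finrank_centre [FiniteDimensional ℝ K] :
    Module.finrank ℝ (centre m n) = Module.finrank ℝ K := by
  rw [centre_eq_range_zₗ]
  exact LinearMap.finrank_range_of_inj (zₗ_injective m n)

lemma finrank_eq [FiniteDimensional ℝ K] :
    Module.finrank ℝ (HK K m n) =
      n * Module.finrank ℝ K + (n * Module.finrank ℝ K + Module.finrank ℝ K) := by
  show Module.finrank ℝ ((Fin n → K) × (Fin n → K) × K) = _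
  rw [Module.finrank_prod, Module.finrank_prod, Module.finrank_pi_fintype]
  simp

lemma lie_def (x y : HK K m n) : ⁅x, y⁆ = HK.z m n (br m n x y) := rfl

lemma mem_centre_iff (x : HK K m n) : x ∈ centre m n ↔ x.1 = 0 ∧ x.2.1 = 0 := by
  obtain ⟨v, w, c⟩ := x
  constructor
  · rintro ⟨d, hd⟩
    cases hd
    exact ⟨rfl, rfl⟩
  · rintro ⟨rfl, rfl⟩
    exact ⟨c, rfl⟩

lemma br_single_snd (x : HK K m n) (k : Fin n) (a : K) :
    br m n x ((0 : Fin n → K), Pi.single k a, (0 : K)) = m (x.1 k) a := by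
  unfold br
  rw [Fintype.sum_eq_single k fun j hj => by simp [Pi.single_eq_of_ne hj]]
  simp

lemma br_single_fst (x : HK K m n) (k : Fin n) (a : K) :
    br m n x (Pi.single k a, (0 : Fin n → K), (0 : K)) = -m a (x.2.1 k) := by
  unfold br
  rw [Fintype.sum_eq_single k fun j hj => by simp [Pi.single_eq_of_ne hj]]
  simp

lemma centre_le_coadjointIsotropy (ξ : Module.Dual ℝ (HK K m n)) :
    centre m n ≤ coadjointIsotropy ξ := by
  rintro _ ⟨c, rfl⟩ y
  rw [lie_def, br_z_left, ← zₗ_apply, map_zero, map_zero]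

variable {m n}

lemma apply_z_mul_left_eq_zero {ξ : Module.Dual ℝ (HK K m n)} {x : HK K m n}
    (hx : x ∈ coadjointIsotropy ξ) (k : Fin n) (a : K) : ξ (HK.z m n (m (x.1 k) a)) = 0 := by
  have h : ξ (HK.z m n (br m n x ((0 : Fin n → K), Pi.single k a, (0 : K)))) = 0 := hx _
  rwa [br_single_snd] at h

lemma apply_z_mul_right_eq_zero {ξ : Module.Dual ℝ (HK K m n)} {x : HK K m n}
    (hx : x ∈ coadjointIsotropy ξ) (k : Fin n) (a : K) : ξ (HK.z m n (m a (x.2.1 k))) = 0 := by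
  have h : ξ (HK.z m n (br m n x (Pi.single k a, (0 : Fin n → K), (0 : K)))) = 0 := hx _
  rwa [br_single_fst, ← zₗ_apply, map_neg, map_neg, neg_eq_zero] at h

lemma coadjointIsotropy_le_centre
    (hsurj : ∀ a : K, a ≠ 0 → Function.Surjective (m a) ∧ Function.Surjective (m.flip a))
    {ξ : Module.Dual ℝ (HK K m n)} (hξ : ∃ c : K, ξ (HK.z m n c) ≠ 0) :
    coadjointIsotropy ξ ≤ centre m n := by
  obtain ⟨c, hc⟩ := hξ
  intro x hx
  rw [mem_centre_iff]
  constructor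
  · funext k
    by_contra hk
    obtain ⟨a, rfl⟩ := (hsurj _ hk).1 c
    exact hc (apply_z_mul_left_eq_zero hx k a)
  · funext k
    by_contra hk
    obtain ⟨a, rfl⟩ := (hsurj _ hk).2 c
    exact hc (apply_z_mul_right_eq_zero hx k a)

end HK

theorem HK_isotropy_eq_centre_general
    (K : Type*) [AddCommGroup K] [Module ℝ K] [FiniteDimensional ℝ K]
    (m : K →ₗ[ℝ] K →ₗ[ℝ] K)
    (hdiv : ∀ a : K, a ≠ 0 →
      Function.Injective (fun x => m a x) ∧ Function.Injective (fun x => m x a))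
    (n : ℕ)
    (ξ : Module.Dual ℝ (HK K m n)) (hξ : ∃ c : K, ξ (HK.z m n c) ≠ 0) :
    coadjointIsotropy ξ = HK.centre m n ∧
    Module.finrank ℝ (HK K m n) - Module.finrank ℝ (coadjointIsotropy ξ)
      = 2 * n * Module.finrank ℝ K := by
  have hsurj (a : K) (ha : a ≠ 0) : Function.Surjective (m a) ∧ Function.Surjective (m.flip a) :=
    ⟨LinearMap.injective_iff_surjective.mp (hdiv a ha).1,
      LinearMap.injective_iff_surjective.mp (hdiv a ha).2⟩
  have heq : coadjointIsotropy ξ = HK.centre m n :=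
    le_antisymm (HK.coadjointIsotropy_le_centre hsurj hξ) (HK.centre_le_coadjointIsotropy m n ξ)
  refine ⟨heq, ?_⟩
  rw [heq, HK.finrank_centre, HK.finrank_eq, two_mul, add_mul]
  omega

/-- Lemma 4.10(ii): for a finite-dimensional real division algebra `K` and `n ≥ 1`, every
linear functional `ξ` on `h_K = K^n × K^n × K` which does not vanish identically on the centre
`z = {0} × {0} × K` has coadjoint isotropy subalgebra `h_K(ξ)` equal to `z`; consequently
`dim h_K − dim h_K(ξ) = 2n · dim_ℝ K`. -/
theorem HK_isotropy_eq_centre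
    (K : Type*) [AddCommGroup K] [Module ℝ K] [FiniteDimensional ℝ K] [Nontrivial K]
    (m : K →ₗ[ℝ] K →ₗ[ℝ] K)
    (hdiv : ∀ a : K, a ≠ 0 →
      Function.Injective (fun x => m a x) ∧ Function.Injective (fun x => m x a))
    (n : ℕ) (hn : 1 ≤ n)
    (ξ : Module.Dual ℝ (HK K m n)) (hξ : ∃ c : K, ξ (HK.z m n c) ≠ 0) :
    coadjointIsotropy ξ = HK.centre m n ∧
    Module.finrank ℝ (HK K m n) - Module.finrank ℝ (coadjointIsotropy ξ)
      = 2 * n * Module.finrank ℝ K :=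
  HK_isotropy_eq_centre_general K m hdiv n ξ hξ
end

section
/- Let n be a finite-dimensional real nilpotent Lie algebra with centre z := {X ∈ n | ∀ Y ∈ n, [X,Y] = 0}, and let D : n → n be a derivation (so D(z) ⊆ z automatically). Let ξ be a linear functional on n with ξ|_z ≠ 0. If there exists X ∈ n such that ξ ∘ exp(D) = ξ ∘ exp(ad X) as linear functionals on n, then the ℂ-linear extension (base change to ℂ) of the restriction D|_z : z → z has an eigenvalue belonging to 2πi·ℤ; in particular σ(D|_z) ∩ 2πi·ℤ ≠ ∅. -/
/-!
Write `E = exp D` and `z` for the centre. A derivation preserves `z`, hence so does `E`, while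
`exp (ad X)` is the identity on `z`; so the hypothesis says `ξ ∘ E = ξ` on `z`. Since `ξ|_z ≠ 0`,
`E - 1` cannot be invertible on `z`, i.e. the fixed space `K = ker (E - 1) ∩ z` is nonzero. As `D`
commutes with `E`, `K` is `D`-invariant, so the complexification of `D` has an eigenvector `v` in
`K_ℂ`, with eigenvalue `μ` say. Then `v = E v = exp μ • v`, so `exp μ = 1`.
-/

open scoped Matrix TensorProduct
open NormedSpace (exp)

namespace Matrix

variable {𝕂 ι : Type*} [RCLike 𝕂] [Fintype ι] [DecidableEq ι]

open scoped Matrix.Norms.Operator in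
theorem exp_mulVec_of_mulVec_eq_smul {N : Matrix ι ι 𝕂} {x : ι → 𝕂} {μ : 𝕂}
    (h : N *ᵥ x = μ • x) : exp N *ᵥ x = exp μ • x := by
  have hpow (n : ℕ) : N ^ n *ᵥ x = μ ^ n • x := by
    induction n with
    | zero => simp
    | succ n ih => rw [pow_succ', ← mulVec_mulVec, ih, mulVec_smul, h, smul_smul, ← pow_succ]
  have hN := (NormedSpace.exp_series_hasSum_exp' (𝕂 := 𝕂) N).map (mulVec.addMonoidHomLeft x)
    (continuous_id.matrix_mulVec continuous_const)
  have hμ := (NormedSpace.exp_series_hasSum_exp' (𝕂 := 𝕂) μ).smul_const x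
  refine hN.unique ?_
  convert hμ using 2 with n
  show (_ • N ^ n) *ᵥ x = _
  rw [smul_mulVec, hpow, smul_smul, smul_eq_mul]

theorem exp_mulVec_mem {N : Matrix ι ι 𝕂} {p : Submodule 𝕂 (ι → 𝕂)}
    (h : ∀ w ∈ p, N *ᵥ w ∈ p) : ∀ w ∈ p, exp N *ᵥ w ∈ p := by
  let S : Subalgebra 𝕂 (Matrix ι ι 𝕂) :=
    { carrier := {M | ∀ w ∈ p, M *ᵥ w ∈ p}
      mul_mem' := fun hM hN w hw => by rw [← mulVec_mulVec]; exact hM _ (hN w hw)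
      add_mem' := fun hM hN w hw => by rw [add_mulVec]; exact p.add_mem (hM w hw) (hN w hw)
      algebraMap_mem' := fun c w hw => by
        rw [Algebra.algebraMap_eq_smul_one, smul_mulVec, one_mulVec]; exact p.smul_mem c hw }
  have hS : IsClosed (S : Set (Matrix ι ι 𝕂)) := by
    have hp : IsClosed (p : Set (ι → 𝕂)) := p.closed_of_finiteDimensional
    convert isClosed_biInter fun w (_ : w ∈ p) =>
      hp.preimage (continuous_id.matrix_mulVec (continuous_const (y := w)))
    ext M
    simp [S]
  exact NormedSpace.exp_mem (R := 𝕂) hS h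

end Matrix

namespace Module.End

section expInBasis

variable {𝕂 V ι : Type*} [RCLike 𝕂] [AddCommGroup V] [Module 𝕂 V] [Fintype ι] [DecidableEq ι]

noncomputable def expInBasis (b : Basis ι 𝕂 V) (f : Module.End 𝕂 V) : Module.End 𝕂 V :=
  Matrix.toLin b b (exp (LinearMap.toMatrix b b f))

variable (b : Basis ι 𝕂 V) (f : Module.End 𝕂 V)

theorem repr_expInBasis_apply (x : V) :
    ⇑(b.repr (expInBasis b f x)) = exp (LinearMap.toMatrix b b f) *ᵥ ⇑(b.repr x) :=
  Matrix.repr_toLin _ _ _ _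

theorem expInBasis_apply_of_apply_eq_smul {x : V} {μ : 𝕂} (h : f x = μ • x) :
    expInBasis b f x = exp μ • x := by
  have hM : LinearMap.toMatrix b b f *ᵥ ⇑(b.repr x) = μ • ⇑(b.repr x) := by
    rw [LinearMap.toMatrix_mulVec_repr, h, map_smul, Finsupp.coe_smul]
  refine b.repr.injective (DFunLike.coe_injective ?_)
  rw [repr_expInBasis_apply, Matrix.exp_mulVec_of_mulVec_eq_smul hM, map_smul, Finsupp.coe_smul]

theorem expInBasis_apply_mem {p : Submodule 𝕂 V} (h : ∀ x ∈ p, f x ∈ p) :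
    ∀ x ∈ p, expInBasis b f x ∈ p := by
  let q := p.map b.equivFun.toLinearMap
  have hq (x : V) : x ∈ p ↔ ⇑(b.repr x) ∈ q := by
    simp [q, Submodule.mem_map_equiv]
  have hfq : ∀ w ∈ q, LinearMap.toMatrix b b f *ᵥ w ∈ q := by
    rintro _ ⟨x, hx, rfl⟩
    rw [LinearEquiv.coe_coe, Basis.equivFun_apply, LinearMap.toMatrix_mulVec_repr, ← hq]
    exact h x hx
  intro x hx
  rw [hq, repr_expInBasis_apply]
  exact Matrix.exp_mulVec_mem hfq _ ((hq x).1 hx)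

theorem commute_expInBasis : Commute (expInBasis b f) f := by
  apply (LinearMap.toMatrix b b).injective
  rw [LinearMap.toMatrix_mul, LinearMap.toMatrix_mul, expInBasis, LinearMap.toMatrix_toLin]
  exact (Commute.refl _).exp_left

end expInBasis

open scoped Matrix.Norms.Operator in
theorem baseChange_expInBasis {𝕂 V ι : Type*} [RCLike 𝕂] [AddCommGroup V] [Module ℝ V]
    [Fintype ι] [DecidableEq ι] (b : Basis ι ℝ V) (f : Module.End ℝ V) :
    (expInBasis b f).baseChange 𝕂 =
      expInBasis (Algebra.TensorProduct.basis 𝕂 b) (f.baseChange 𝕂) := by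
  apply (LinearMap.toMatrix (Algebra.TensorProduct.basis 𝕂 b)
    (Algebra.TensorProduct.basis 𝕂 b)).injective
  rw [LinearMap.toMatrix_baseChange, expInBasis, expInBasis, LinearMap.toMatrix_toLin,
    LinearMap.toMatrix_toLin, LinearMap.toMatrix_baseChange]
  exact NormedSpace.map_exp (algebraMap ℝ 𝕂).mapMatrix
    (continuous_id.matrix_map RCLike.continuous_ofReal) _

theorem eigenspace_one_inf_ne_bot_of_dual {K V : Type*} [Field K] [AddCommGroup V]
    [Module K V] [FiniteDimensional K V] {E : Module.End K V} {p : Submodule K V}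
    (hE : ∀ x ∈ p, E x ∈ p) {φ : Module.Dual K V} (hφ : ∀ x ∈ p, φ (E x) = φ x)
    {z : V} (hz : z ∈ p) (hφz : φ z ≠ 0) :
    eigenspace E 1 ⊓ p ≠ ⊥ := by
  intro hbot
  let g := (E - 1).restrict fun x hx => p.sub_mem (hE x hx) hx
  have hg : Function.Injective g := by
    rw [← LinearMap.ker_eq_bot, eq_bot_iff]
    intro x hx
    have hEx : E x = x := by
      simpa [g, sub_eq_zero, Subtype.ext_iff] using hx
    have : (x : V) ∈ eigenspace E 1 ⊓ p :=
      Submodule.mem_inf.mpr ⟨by rw [mem_eigenspace_iff, one_smul, hEx], x.2⟩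
    exact Subtype.ext ((Submodule.eq_bot_iff _).mp hbot _ this)
  obtain ⟨u, hu⟩ := LinearMap.injective_iff_surjective.mp hg ⟨z, hz⟩
  have hzu : z = E u - u := by simpa [g, Subtype.ext_iff] using hu.symm
  exact hφz (by rw [hzu, map_sub, hφ u u.2, sub_self])

end Module.End

namespace Submodule

theorem baseChange_apply_eq_of_eqOn {R A M N : Type*} [CommSemiring R] [CommSemiring A]
    [Algebra R A] [AddCommMonoid M] [Module R M] [AddCommMonoid N] [Module R N]
    {p : Submodule R M} {f g : M →ₗ[R] N} (h : ∀ x ∈ p, f x = g x) :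
    ∀ v ∈ p.baseChange A, f.baseChange A v = g.baseChange A v := by
  rintro _ ⟨u, rfl⟩
  have hfg : f ∘ₗ p.subtype = g ∘ₗ p.subtype := LinearMap.ext fun x => h x x.2
  rw [← LinearMap.comp_apply, ← LinearMap.comp_apply, ← LinearMap.baseChange_comp,
    ← LinearMap.baseChange_comp, hfg]

theorem exists_mem_baseChange_hasEigenvector {K A V : Type*} [Field K] [Field A]
    [IsAlgClosed A] [Algebra K A] [AddCommGroup V] [Module K V] [FiniteDimensional K V]
    {p : Submodule K V} (hp : p ≠ ⊥) {f : Module.End K V} (hf : ∀ x ∈ p, f x ∈ p) :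
    ∃ μ : A, ∃ v ∈ p.baseChange A, v ≠ 0 ∧ f.baseChange A v = μ • v := by
  have : Nontrivial p := p.nontrivial_iff_ne_bot.mpr hp
  have : Nontrivial (A ⊗[K] p) := by
    apply Module.nontrivial_of_finrank_pos (R := A)
    rw [Module.finrank_baseChange]
    exact Module.finrank_pos
  let g := f.restrict hf
  obtain ⟨μ, hμ⟩ := Module.End.exists_eigenvalue (g.baseChange A)
  obtain ⟨u, hu⟩ := hμ.exists_hasEigenvector
  have hι : Function.Injective (p.subtype.baseChange A) := by
    rw [LinearMap.baseChange_eq_ltensor]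
    exact Module.Flat.lTensor_preserves_injective_linearMap _ p.injective_subtype
  refine ⟨μ, _, ⟨u, rfl⟩, (map_ne_zero_iff _ hι).mpr hu.2, ?_⟩
  have hfg : f ∘ₗ p.subtype = p.subtype ∘ₗ g := rfl
  rw [← LinearMap.comp_apply, ← LinearMap.baseChange_comp, hfg, LinearMap.baseChange_comp,
    LinearMap.comp_apply, hu.apply_eq_smul, map_smul]

end Submodule

theorem LieAlgebra.apply_mem_center_of_leibniz {R L : Type*} [CommRing R] [LieRing L]
    [LieAlgebra R L] {D : L →ₗ[R] L} (hD : ∀ x y : L, D ⁅x, y⁆ = ⁅D x, y⁆ + ⁅x, D y⁆)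
    {z : L} (hz : z ∈ center R L) : D z ∈ center R L := by
  rw [LieModule.mem_maxTrivSubmodule] at hz ⊢
  intro x
  have h := hD x z
  rw [hz, map_zero, hz, zero_add] at h
  exact h.symm

theorem LieAlgebra.expInBasis_ad_apply_of_mem_center {𝕂 L ι : Type*} [RCLike 𝕂] [LieRing L]
    [LieAlgebra 𝕂 L] [Fintype ι] [DecidableEq ι] (b : Module.Basis ι 𝕂 L) (X : L) {z : L}
    (hz : z ∈ center 𝕂 L) : Module.End.expInBasis b (ad 𝕂 L X) z = z := by
  have hXz : ad 𝕂 L X z = (0 : 𝕂) • z := by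
    rw [zero_smul, ad_apply]
    exact (LieModule.mem_maxTrivSubmodule 𝕂 L L z).mp hz X
  rw [Module.End.expInBasis_apply_of_apply_eq_smul b _ hXz, NormedSpace.exp_zero, one_smul]

open Module.End in
theorem eigenvalue_of_exp_in_coadjoint_orbit_general
    (L : Type*) [LieRing L] [LieAlgebra ℝ L] [FiniteDimensional ℝ L]
    (D : L →ₗ[ℝ] L)
    (hD : ∀ x y : L, D ⁅x, y⁆ = ⁅D x, y⁆ + ⁅x, D y⁆)
    (ξ : Module.Dual ℝ L)
    (hξ : ∃ Z : L, (∀ Y : L, ⁅Z, Y⁆ = 0) ∧ ξ Z ≠ 0)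
    (X : L) (d : ℕ) (b : Module.Basis (Fin d) ℝ L)
    (hX : ∀ Y : L,
      ξ (Matrix.toLin b b (NormedSpace.exp (LinearMap.toMatrix b b D)) Y)
        = ξ (Matrix.toLin b b
            (NormedSpace.exp (LinearMap.toMatrix b b (LieAlgebra.ad ℝ L X))) Y)) :
    ∃ (μ : ℂ) (v : ℂ ⊗[ℝ] L), v ≠ 0 ∧
      v ∈ Submodule.baseChange ℂ (LieAlgebra.center ℝ L).toSubmodule ∧
      LinearMap.baseChange ℂ D v = μ • v ∧
      ∃ k : ℤ, μ = 2 * Real.pi * Complex.I * (k : ℂ) := by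
  replace hX : ∀ Y, ξ (expInBasis b D Y) = ξ (expInBasis b (LieAlgebra.ad ℝ L X) Y) := hX
  set Z := (LieAlgebra.center ℝ L).toSubmodule
  set E := expInBasis b D
  obtain ⟨z, hz, hξz⟩ := hξ
  have hzZ : z ∈ Z := (LieModule.mem_maxTrivSubmodule ℝ L L z).mpr fun x => by
    rw [← lie_skew, hz, neg_zero]
  have hDZ : ∀ x ∈ Z, D x ∈ Z := fun x => LieAlgebra.apply_mem_center_of_leibniz hD
  have hξE : ∀ x ∈ Z, ξ (E x) = ξ x := fun x hx => by
    rw [hX x, LieAlgebra.expInBasis_ad_apply_of_mem_center b X hx]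
  set K := eigenspace E 1 ⊓ Z
  have hK : K ≠ ⊥ := eigenspace_one_inf_ne_bot_of_dual (expInBasis_apply_mem b D hDZ) hξE hzZ hξz
  have hDK : ∀ x ∈ K, D x ∈ K := fun x hx =>
    ⟨mapsTo_genEigenspace_of_comm (commute_expInBasis b D) 1 1 hx.1, hDZ x hx.2⟩
  obtain ⟨μ, v, hvK, hv0, hDv⟩ := Submodule.exists_mem_baseChange_hasEigenvector (A := ℂ) hK hDK
  have hEv : E.baseChange ℂ v = v := by
    simpa only [LinearMap.baseChange_id, LinearMap.id_apply] using
      Submodule.baseChange_apply_eq_of_eqOn (g := LinearMap.id)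
        (fun x (hx : x ∈ K) => (mem_eigenspace_iff.mp hx.1).trans (one_smul ℝ x))
        v hvK
  have hexp : Complex.exp μ = 1 := by
    rw [baseChange_expInBasis, expInBasis_apply_of_apply_eq_smul _ _ hDv,
      ← Complex.exp_eq_exp_ℂ] at hEv
    exact smul_left_injective ℂ hv0 (hEv.trans (one_smul ℂ v).symm)
  obtain ⟨k, hk⟩ := Complex.exp_eq_one_iff.mp hexp
  exact ⟨μ, v, hv0, Submodule.baseChange_mono ℂ inf_le_right hvK, hDv, k, by rw [hk]; ring⟩

/-- Lemma 4.4: let `L` be a finite-dimensional real nilpotent Lie algebra with centre `z`, let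
`D : L → L` be a derivation, and let `ξ` be a linear functional on `L` with `ξ|_z ≠ 0`.  If
there exists `X ∈ L` with `ξ ∘ exp D = ξ ∘ exp (ad X)` (the exponentials being computed, via
an arbitrary basis `b`, through the matrix exponential, which is independent of the choice),
then the complexification of `D|_z` has an eigenvalue in `2πi·ℤ`; i.e.
`σ(D|_z) ∩ 2πi·ℤ ≠ ∅` (stated here as: the complexified `D` has an eigenvector lying in the
complexified centre, with eigenvalue in `2πi·ℤ`). -/
theorem eigenvalue_of_exp_in_coadjoint_orbit
    (L : Type*) [LieRing L] [LieAlgebra ℝ L] [FiniteDimensional ℝ L]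
    [LieRing.IsNilpotent L]
    (D : L →ₗ[ℝ] L)
    (hD : ∀ x y : L, D ⁅x, y⁆ = ⁅D x, y⁆ + ⁅x, D y⁆)
    (ξ : Module.Dual ℝ L)
    (hξ : ∃ Z : L, (∀ Y : L, ⁅Z, Y⁆ = 0) ∧ ξ Z ≠ 0)
    (X : L) (d : ℕ) (b : Module.Basis (Fin d) ℝ L)
    (hX : ∀ Y : L,
      ξ (Matrix.toLin b b (NormedSpace.exp (LinearMap.toMatrix b b D)) Y)
        = ξ (Matrix.toLin b b
            (NormedSpace.exp (LinearMap.toMatrix b b (LieAlgebra.ad ℝ L X))) Y)) :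
    ∃ (μ : ℂ) (v : ℂ ⊗[ℝ] L), v ≠ 0 ∧
      v ∈ Submodule.baseChange ℂ (LieAlgebra.center ℝ L).toSubmodule ∧
      LinearMap.baseChange ℂ D v = μ • v ∧
      ∃ k : ℤ, μ = 2 * Real.pi * Complex.I * (k : ℂ) :=
  eigenvalue_of_exp_in_coadjoint_orbit_general L D hD ξ hξ X d b hX
end

section
/- Let g be a finite-dimensional Lie algebra over ℂ with centre z := {X ∈ g | ∀ Y ∈ g, [X,Y] = 0}, and assume that the derived algebra satisfies [g,g] = z. Let D be a derivation of g that is diagonalizable, i.e., g is spanned by eigenvectors of D. Since D(z) ⊆ z, D induces an endomorphism D̃ of the quotient Lie algebra g/z. Then every eigenvalue μ of the restriction D|_z : z → z can be written as μ = λ₁ + λ₂ for some eigenvalues λ₁, λ₂ of D̃. -/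
/-- Claim (4.1) in the proof of Lemma 4.6 (complexified form): let `g` be a finite-dimensional
complex Lie algebra whose derived algebra equals its centre `z`, and let `D` be a
diagonalizable derivation of `g`, inducing an endomorphism `D̃` of `g/z`.  Then every
eigenvalue of `D|_z` is a sum of two eigenvalues of `D̃`. -/
theorem eigenvalue_center_eq_sum_of_quotient_eigenvalues
    (g : Type*) [LieRing g] [LieAlgebra ℂ g] [FiniteDimensional ℂ g]
    (D : Module.End ℂ g)
    (hD : ∀ x y : g, D ⁅x, y⁆ = ⁅D x, y⁆ + ⁅x, D y⁆)
    (hdiag : (⨆ μ : ℂ, Module.End.eigenspace D μ) = ⊤)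
    (hderived : Submodule.span ℂ {x : g | ∃ a b : g, ⁅a, b⁆ = x}
      = (LieAlgebra.center ℂ g).toSubmodule)
    (hinv : ∀ x ∈ (LieAlgebra.center ℂ g).toSubmodule,
      D x ∈ (LieAlgebra.center ℂ g).toSubmodule) :
    ∀ μ : ℂ,
      Module.End.HasEigenvalue (D.restrict hinv) μ →
      ∃ l₁ l₂ : ℂ,
        Module.End.HasEigenvalue
          (Submodule.mapQ (LieAlgebra.center ℂ g).toSubmodule
            (LieAlgebra.center ℂ g).toSubmodule D hinv) l₁ ∧
        Module.End.HasEigenvalue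
          (Submodule.mapQ (LieAlgebra.center ℂ g).toSubmodule
            (LieAlgebra.center ℂ g).toSubmodule D hinv) l₂ ∧
        μ = l₁ + l₂ := by
  set Z := (LieAlgebra.center ℂ g).toSubmodule with hZ
  set E := D.restrict hinv with hE
  set Q := Submodule.mapQ Z Z D hinv with hQ
  set T : Set ℂ := {μ | ∃ l₁ l₂ : ℂ, Module.End.HasEigenvalue Q l₁ ∧
    Module.End.HasEigenvalue Q l₂ ∧ μ = l₁ + l₂} with hT
  set W : Submodule ℂ g := ⨆ l ∈ T, (Module.End.eigenspace E l).map Z.subtype with hW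
  -- eigenvalue of Q from a non-central eigenvector of D
  have hQeig : ∀ (l : ℂ) (x : g), x ∈ Module.End.eigenspace D l → x ∉ Z →
      Module.End.HasEigenvalue Q l := by
    intro l x hx hxZ
    apply Module.End.hasEigenvalue_of_hasEigenvector (x := Z.mkQ x)
    constructor
    · rw [Module.End.mem_eigenspace_iff] at hx ⊢
      simp only [hQ, Submodule.mkQ_apply, Submodule.mapQ_apply, hx, map_smul,
        Submodule.Quotient.mk_smul]
    · simpa [Submodule.Quotient.mk_eq_zero] using hxZ
  -- core: bracket of two eigenvectors lies in W
  have core : ∀ (l₁ l₂ : ℂ) (x y : g), x ∈ Module.End.eigenspace D l₁ →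
      y ∈ Module.End.eigenspace D l₂ → ⁅x, y⁆ ∈ W := by
    intro l₁ l₂ x y hx hy
    by_cases h0 : ⁅x, y⁆ = 0
    · rw [h0]; exact W.zero_mem
    have hz : ⁅x, y⁆ ∈ Z := by
      rw [← hderived]
      exact Submodule.subset_span ⟨x, y, rfl⟩
    have hxZ : x ∉ Z := by
      intro hxc
      rw [hZ, LieSubmodule.mem_toSubmodule] at hxc
      have := (LieModule.mem_maxTrivSubmodule ℂ g g x).mp hxc y
      exact h0 (by rw [← lie_skew, this, neg_zero])
    have hyZ : y ∉ Z := by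
      intro hyc
      rw [hZ, LieSubmodule.mem_toSubmodule] at hyc
      exact h0 (LieModule.mem_maxTrivSubmodule ℂ g g y |>.mp hyc x)
    rw [Module.End.mem_eigenspace_iff] at hx hy
    have hDb : D ⁅x, y⁆ = (l₁ + l₂) • ⁅x, y⁆ := by
      rw [hD, hx, hy, smul_lie, lie_smul, add_smul]
    have hmem : (⟨⁅x, y⁆, hz⟩ : Z) ∈ Module.End.eigenspace E (l₁ + l₂) := by
      rw [Module.End.mem_eigenspace_iff]
      ext
      simpa [hE, LinearMap.restrict_apply] using hDb
    have hTmem : l₁ + l₂ ∈ T := ⟨l₁, l₂, hQeig l₁ x (by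
        rwa [Module.End.mem_eigenspace_iff]) hxZ,
      hQeig l₂ y (by rwa [Module.End.mem_eigenspace_iff]) hyZ, rfl⟩
    have : ⁅x, y⁆ ∈ (Module.End.eigenspace E (l₁ + l₂)).map Z.subtype :=
      ⟨⟨⁅x, y⁆, hz⟩, hmem, rfl⟩
    exact Submodule.mem_iSup_of_mem (l₁ + l₂) (Submodule.mem_iSup_of_mem hTmem this)
  -- all brackets lie in W
  have key : ∀ a b : g, ⁅a, b⁆ ∈ W := by
    intro a b
    have ha : a ∈ ⨆ μ : ℂ, Module.End.eigenspace D μ := hdiag ▸ Submodule.mem_top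
    induction ha using Submodule.iSup_induction' with
    | mem l₁ x hx =>
      have hb : b ∈ ⨆ μ : ℂ, Module.End.eigenspace D μ := hdiag ▸ Submodule.mem_top
      induction hb using Submodule.iSup_induction' with
      | mem l₂ y hy => exact core l₁ l₂ x y hx hy
      | zero => simp
      | add y y' _ _ hy hy' => rw [lie_add]; exact W.add_mem hy hy'
    | zero => simp
    | add x x' _ _ hx hx' => rw [add_lie]; exact W.add_mem hx hx'
  -- hence Z ≤ W, i.e. the eigenspaces of E for eigenvalues in T span Z
  have hZW : Z ≤ W := by
    rw [← hderived, Submodule.span_le]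
    rintro _ ⟨a, b, rfl⟩
    exact key a b
  have htop : (⨆ l ∈ T, Module.End.eigenspace E l) = ⊤ := by
    rw [eq_top_iff]
    rintro ⟨v, hv⟩ -
    have hvW : v ∈ W := hZW hv
    rw [hW] at hvW
    simp only [← Submodule.map_iSup] at hvW
    obtain ⟨u, hu, huv⟩ := hvW
    have : u = ⟨v, hv⟩ := Subtype.ext huv
    rwa [← this]
  intro μ hμ
  by_contra hcon
  push_neg at hcon
  have hμT : μ ∉ T := by
    rintro ⟨l₁, l₂, h1, h2, rfl⟩
    exact (hcon l₁ l₂ h1 h2).elim rfl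
  have hdisj := Module.End.eigenspaces_iSupIndep E μ
  have hle : (⨆ l ∈ T, Module.End.eigenspace E l) ≤
      ⨆ (l : ℂ) (_ : l ≠ μ), Module.End.eigenspace E l := by
    refine iSup₂_le fun l hl => ?_
    exact le_iSup₂ (f := fun l _ => Module.End.eigenspace E l) l
      (fun (h : l = μ) => hμT (h ▸ hl))
  rw [htop, top_le_iff] at hle
  rw [hle] at hdisj
  exact hμ (disjoint_top.mp hdisj)
end
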